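/- (Error-reduction criterion of Proposition 1.) Under symmetric label noise with error rate e satisfying 0 ≤ e < (K−1)/K and positive class masses, for any two measurable LLM labelers ŷ₀, ŷ₁ : Ω → Fin K evaluated against the same ground truth y and the same reference r, the measurement error strictly decreases, ε(ŷ₁) < ε(ŷ₀), if and only if the observed paired contrast exceeds the change in co-labeling covariance: A_R(ŷ₁) − A_R(ŷ₀) > J(ŷ₁) − J(ŷ₀). -/

import Mathlib

open MeasureTheory

/-- True agreement `A_T(ŷ) = μ({ŷ = y})`. -/
noncomputable def trueAgree {Ω : Type*} [MeasurableSpace Ω] {K : ℕ}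
    (μ : Measure Ω) (y yhat : Ω → Fin K) : ℝ :=
  (μ {ω | yhat ω = y ω}).toReal

/-- Reference agreement `A_R(ŷ) = μ({ŷ = r})`. -/
noncomputable def refAgree {Ω : Type*} [MeasurableSpace Ω] {K : ℕ}
    (μ : Measure Ω) (r yhat : Ω → Fin K) : ℝ :=
  (μ {ω | yhat ω = r ω}).toReal

/-- Measurement error `ε(ŷ) = 1 − A_T(ŷ)`. -/
noncomputable def measError {Ω : Type*} [MeasurableSpace Ω] {K : ℕ}
    (μ : Measure Ω) (y yhat : Ω → Fin K) : ℝ :=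
  1 - trueAgree μ y yhat

/-- Co-labeling covariance
`J(ŷ) = ∑ₖ ∑ₗ [ μ({ŷ=ℓ}∩{r=ℓ}∩{y=k}) − μ({ŷ=ℓ}∩{y=k})·μ({r=ℓ}∩{y=k}) / μ({y=k}) ]`. -/
noncomputable def coLabelCov {Ω : Type*} [MeasurableSpace Ω] {K : ℕ}
    (μ : Measure Ω) (y r yhat : Ω → Fin K) : ℝ :=
  ∑ k : Fin K, ∑ l : Fin K,
    ((μ ({ω | yhat ω = l} ∩ {ω | r ω = l} ∩ {ω | y ω = k})).toReal
      - (μ ({ω | yhat ω = l} ∩ {ω | y ω = k})).toReal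
          * (μ ({ω | r ω = l} ∩ {ω | y ω = k})).toReal
          / (μ {ω | y ω = k}).toReal)

/-! Splitting every event along the true class `y = k`, the difference `A_R − J` collapses to
`∑ₖ ∑ₗ μ(ŷ = ℓ, y = k) μ(r = ℓ, y = k) / μ(y = k)`. Under symmetric noise the `k`-th inner sum is
`(1 − e) μ(ŷ = k, y = k) + e/(K − 1) (μ(y = k) − μ(ŷ = k, y = k))`, so
`A_R − J = e/(K − 1) + (1 − e − e/(K − 1)) A_T`. The slope is positive exactly when
`e < (K − 1)/K`, hence the paired contrast of `A_R − J` has the sign of `A_T(ŷ₁) − A_T(ŷ₀)`. -/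

open Finset

theorem sum_measureReal_fiber_inter {Ω α : Type*} [MeasurableSpace Ω] [Fintype α]
    [MeasurableSpace α] [MeasurableSingletonClass α] (μ : Measure Ω) [IsFiniteMeasure μ]
    {f : Ω → α} (hf : Measurable f) {s : Set Ω}
    (hs : MeasurableSet s) : ∑ a, μ.real ({ω | f ω = a} ∩ s) = μ.real s := by
  have hfib (a : α) : MeasurableSet {ω | f ω = a} := hf (measurableSet_singleton a)
  have hunion : ⋃ a ∈ (univ : Finset α), {ω | f ω = a} ∩ s = s := by ext; simp
  rw [← measureReal_biUnion_finset _ fun a _ ↦ (hfib a).inter hs, hunion]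
  intro a _ b _ hab
  exact Set.disjoint_left.2 fun ω ha hb ↦ hab (ha.1.symm.trans hb.1)

theorem sum_mul_div_eq_of_diag_off {ι : Type*} [Fintype ι] [DecidableEq ι] {a b : ι → ℝ}
    {p d c : ℝ} (k : ι) (hp : p ≠ 0) (hdiag : b k = d * p) (hoff : ∀ l ≠ k, b l = c * p)
    (hsum : ∑ l, a l = p) :
    ∑ l, a l * b l / p = d * a k + c * (p - a k) := by
  have hterm : ∀ l ∈ univ.erase k, a l * b l / p = c * a l := fun l hl ↦ by
    rw [hoff l (ne_of_mem_erase hl)]; field_simp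
  rw [← add_sum_erase _ _ (mem_univ k), sum_congr rfl hterm, ← mul_sum,
    sum_erase_eq_sub (mem_univ k), hsum, hdiag]
  field_simp

theorem one_sub_sub_div_pos {K : ℕ} (hK : 2 ≤ K) {e : ℝ} (he : e < ((K : ℝ) - 1) / K) :
    0 < 1 - e - e / ((K : ℝ) - 1) := by
  have hK' : (2 : ℝ) ≤ K := by exact_mod_cast hK
  have hK1 : (0 : ℝ) < K - 1 := by linarith
  rw [lt_div_iff₀ (by linarith)] at he
  have : 1 - e - e / ((K : ℝ) - 1) = (K - 1 - e * K) / (K - 1) := by field_simp; ring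
  rw [this]
  exact div_pos (by linarith) hK1

section Agreement

variable {Ω : Type*} [MeasurableSpace Ω] {K : ℕ} (μ : Measure Ω) [IsFiniteMeasure μ]
  {y r yhat : Ω → Fin K}

theorem trueAgree_eq_sum (hy : Measurable y) (hyhat : Measurable yhat) :
    trueAgree μ y yhat = ∑ k, μ.real ({ω | yhat ω = k} ∩ {ω | y ω = k}) := by
  rw [trueAgree, ← measureReal_def,
    ← sum_measureReal_fiber_inter μ hy (measurableSet_eq_fun hyhat hy)]
  refine sum_congr rfl fun k _ ↦ congrArg μ.real ?_
  ext ω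
  grind

theorem refAgree_eq_sum (hy : Measurable y) (hr : Measurable r) (hyhat : Measurable yhat) :
    refAgree μ r yhat
      = ∑ k, ∑ l, μ.real ({ω | yhat ω = l} ∩ {ω | r ω = l} ∩ {ω | y ω = k}) := by
  have hagree := measurableSet_eq_fun hyhat hr
  rw [refAgree, ← measureReal_def, ← sum_measureReal_fiber_inter μ hy hagree]
  refine sum_congr rfl fun k _ ↦ ?_
  have hclass : MeasurableSet {ω | y ω = k} := hy (measurableSet_singleton k)
  rw [← sum_measureReal_fiber_inter μ hyhat (hclass.inter hagree)]
  refine sum_congr rfl fun l _ ↦ congrArg μ.real ?_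
  ext ω
  grind

theorem refAgree_sub_coLabelCov_eq_sum (hy : Measurable y) (hr : Measurable r)
    (hyhat : Measurable yhat) :
    refAgree μ r yhat - coLabelCov μ y r yhat
      = ∑ k, ∑ l, μ.real ({ω | yhat ω = l} ∩ {ω | y ω = k})
          * μ.real ({ω | r ω = l} ∩ {ω | y ω = k}) / μ.real {ω | y ω = k} := by
  simp only [refAgree_eq_sum μ hy hr hyhat, coLabelCov, ← measureReal_def, sum_sub_distrib,
    sub_sub_cancel]

end Agreement

section Noise

variable {Ω : Type*} [MeasurableSpace Ω] {K : ℕ}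

structure SymmetricLabelNoise (μ : Measure Ω) (y r : Ω → Fin K) (e : ℝ) : Prop where
  diag : ∀ k, μ.real ({ω | r ω = k} ∩ {ω | y ω = k}) = (1 - e) * μ.real {ω | y ω = k}
  off : ∀ k l, l ≠ k →
    μ.real ({ω | r ω = l} ∩ {ω | y ω = k}) = e / ((K : ℝ) - 1) * μ.real {ω | y ω = k}

variable {μ : Measure Ω} [IsProbabilityMeasure μ] {y r yhat : Ω → Fin K} {e : ℝ}

theorem SymmetricLabelNoise.refAgree_sub_coLabelCov_eq (hnoise : SymmetricLabelNoise μ y r e)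
    (hpos : ∀ k, 0 < μ {ω | y ω = k}) (hy : Measurable y) (hr : Measurable r)
    (hyhat : Measurable yhat) :
    refAgree μ r yhat - coLabelCov μ y r yhat
      = e / ((K : ℝ) - 1) + (1 - e - e / ((K : ℝ) - 1)) * trueAgree μ y yhat := by
  have hclass (k : Fin K) :
      ∑ l, μ.real ({ω | yhat ω = l} ∩ {ω | y ω = k})
          * μ.real ({ω | r ω = l} ∩ {ω | y ω = k}) / μ.real {ω | y ω = k}
        = (1 - e) * μ.real ({ω | yhat ω = k} ∩ {ω | y ω = k})
          + e / ((K : ℝ) - 1)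
            * (μ.real {ω | y ω = k} - μ.real ({ω | yhat ω = k} ∩ {ω | y ω = k})) :=
    sum_mul_div_eq_of_diag_off k ((measureReal_ne_zero_iff).2 (hpos k).ne') (hnoise.diag k)
      (fun l hl ↦ hnoise.off k l hl)
      (sum_measureReal_fiber_inter μ hyhat (hy (measurableSet_singleton k)))
  have hmass : ∑ k, μ.real {ω | y ω = k} = 1 := by
    simpa using sum_measureReal_fiber_inter μ hy MeasurableSet.univ
  rw [refAgree_sub_coLabelCov_eq_sum μ hy hr hyhat, sum_congr rfl fun k _ ↦ hclass k,
    sum_add_distrib, ← mul_sum, ← mul_sum, sum_sub_distrib, hmass, ← trueAgree_eq_sum μ hy hyhat]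
  ring

end Noise

theorem error_reduction_criterion_general
    {Ω : Type*} [MeasurableSpace Ω] {K : ℕ} (hK : 2 ≤ K)
    (e : ℝ) (he1 : e < ((K : ℝ) - 1) / K)
    (μ : Measure Ω) [IsProbabilityMeasure μ]
    (y r : Ω → Fin K) (hy : Measurable y) (hr : Measurable r)
    (hnoise_diag : ∀ k : Fin K,
      (μ ({ω | r ω = k} ∩ {ω | y ω = k})).toReal
        = (1 - e) * (μ {ω | y ω = k}).toReal)
    (hnoise_off : ∀ k l : Fin K, l ≠ k →
      (μ ({ω | r ω = l} ∩ {ω | y ω = k})).toReal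
        = e / ((K : ℝ) - 1) * (μ {ω | y ω = k}).toReal)
    (hpos : ∀ k : Fin K, 0 < μ {ω | y ω = k})
    (yhat₀ yhat₁ : Ω → Fin K) (hyhat₀ : Measurable yhat₀) (hyhat₁ : Measurable yhat₁) :
    measError μ y yhat₁ < measError μ y yhat₀
      ↔ refAgree μ r yhat₁ - refAgree μ r yhat₀
          > coLabelCov μ y r yhat₁ - coLabelCov μ y r yhat₀ := by
  have hnoise : SymmetricLabelNoise μ y r e := ⟨hnoise_diag, hnoise_off⟩
  have h₀ := hnoise.refAgree_sub_coLabelCov_eq hpos hy hr hyhat₀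
  have h₁ := hnoise.refAgree_sub_coLabelCov_eq hpos hy hr hyhat₁
  have hcontrast : refAgree μ r yhat₁ - refAgree μ r yhat₀
      - (coLabelCov μ y r yhat₁ - coLabelCov μ y r yhat₀)
      = (1 - e - e / ((K : ℝ) - 1)) * (trueAgree μ y yhat₁ - trueAgree μ y yhat₀) := by
    linear_combination h₁ - h₀
  rw [measError, measError, sub_lt_sub_iff_left, gt_iff_lt,
    ← sub_pos (a := refAgree μ r yhat₁ - _), hcontrast,
    mul_pos_iff_of_pos_left (one_sub_sub_div_pos hK he1), sub_pos]

/-- **error-reduction criterion of Proposition 1.** Under symmetric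
label noise with `0 ≤ e < (K−1)/K` and positive class masses, for labelers
`ŷ₀, ŷ₁` against the same `y` and `r`, the measurement error strictly decreases,
`ε(ŷ₁) < ε(ŷ₀)`, iff the observed paired contrast exceeds the change in
co-labeling covariance: `A_R(ŷ₁) − A_R(ŷ₀) > J(ŷ₁) − J(ŷ₀)`. -/
theorem error_reduction_criterion
    {Ω : Type*} [MeasurableSpace Ω] {K : ℕ} (hK : 2 ≤ K)
    (e : ℝ) (he0 : 0 ≤ e) (he1 : e < ((K : ℝ) - 1) / K)
    (μ : Measure Ω) [IsProbabilityMeasure μ]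
    (y r : Ω → Fin K) (hy : Measurable y) (hr : Measurable r)
    (hnoise_diag : ∀ k : Fin K,
      (μ ({ω | r ω = k} ∩ {ω | y ω = k})).toReal
        = (1 - e) * (μ {ω | y ω = k}).toReal)
    (hnoise_off : ∀ k l : Fin K, l ≠ k →
      (μ ({ω | r ω = l} ∩ {ω | y ω = k})).toReal
        = e / ((K : ℝ) - 1) * (μ {ω | y ω = k}).toReal)
    (hpos : ∀ k : Fin K, 0 < μ {ω | y ω = k})
    (yhat₀ yhat₁ : Ω → Fin K) (hyhat₀ : Measurable yhat₀) (hyhat₁ : Measurable yhat₁) :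
    measError μ y yhat₁ < measError μ y yhat₀
      ↔ refAgree μ r yhat₁ - refAgree μ r yhat₀
          > coLabelCov μ y r yhat₁ - coLabelCov μ y r yhat₀ :=
  error_reduction_criterion_general hK e he1 μ y r hy hr hnoise_diag hnoise_off hpos yhat₀ yhat₁
    hyhat₀ hyhat₁
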